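/- The image of P₃ under H_Π satisfies H_Π(P₃) = {(a,b) ∈ P : ab ≤ 2 and b ≥ a^{1/4}}, and P₃ ⊆ H_Π(P₃). -/

import Mathlib

/-- The parameter region P. -/
def Pset : Set (ℝ × ℝ) :=
  {p | 1 < p.1 ∧ p.1 ≤ 2 ∧ 1 ≤ p.2 ∧ p.2 ≤ 2 ∧ p.1 * p.2 ≤ 2}

/-- The parameter region P₃. -/
def P3 : Set (ℝ × ℝ) :=
  {p | p ∈ Pset ∧
    (2 + p.1 ^ 2 + p.1 ^ 3) / (1 + p.1 + p.1 ^ 3) ≤ p.2 ∧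
    p.2 ≤ 2 * (1 + p.1 + p.1 ^ 3) / (p.1 * (2 + p.1 ^ 2 + p.1 ^ 3))}

/-- The renormalization operator H_Π. -/
noncomputable def HPi (p : ℝ × ℝ) : ℝ × ℝ :=
  (p.1 ^ 4, (p.1 * p.2 + p.2 - 2) / (p.1 * (1 + p.1 - p.1 * p.2)))

/-!
For fixed `a` the second coordinate `β` of `H_Π (a, b)` is a Möbius function of `b`, and the two
bounds defining `P₃` are exactly `a ≤ β` and `a⁴ β ≤ 2`. For `(A, B) = H_Π (a, b)` these read
`A ^ (1/4) ≤ B` and `A B ≤ 2`, the constraints cutting the image out of `P`; conversely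
`a = A ^ (1/4)`, and `b` is recovered from `B` by inverting the Möbius map.
On `P₃` the two bounds force `a⁵ ≤ 2`, whence `a ^ (1/4) ≤ a ≤ b`, so `P₃` lies in the image.
-/

def Qset : Set (ℝ × ℝ) := {p ∈ Pset | p.1 * p.2 ≤ 2 ∧ p.1 ^ ((1 : ℝ) / 4) ≤ p.2}

lemma HPi_denom_pos {a b : ℝ} (ha : 1 < a) (hab : a * b ≤ 2) : 0 < a * (1 + a - a * b) := by
  nlinarith

lemma le_HPi_snd_iff {a b : ℝ} (ha : 1 < a) (hab : a * b ≤ 2) :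
    a ≤ (HPi (a, b)).2 ↔ (2 + a ^ 2 + a ^ 3) / (1 + a + a ^ 3) ≤ b := by
  rw [HPi, le_div_iff₀ (HPi_denom_pos ha hab), div_le_iff₀ (by positivity)]
  constructor <;> intro h <;> linarith

lemma pow_four_mul_HPi_snd_le_two_iff {a b : ℝ} (ha : 1 < a) (hab : a * b ≤ 2) :
    a ^ 4 * (HPi (a, b)).2 ≤ 2 ↔ b ≤ 2 * (1 + a + a ^ 3) / (a * (2 + a ^ 2 + a ^ 3)) := by
  rw [HPi, mul_div_assoc', div_le_iff₀ (HPi_denom_pos ha hab), le_div_iff₀ (by positivity)]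
  have key : a ^ 4 * (a * b + b - 2) - 2 * (a * (1 + a - a * b)) =
      a * (b * (a * (2 + a ^ 2 + a ^ 3)) - 2 * (1 + a + a ^ 3)) := by ring
  constructor <;> intro h <;> nlinarith

lemma mem_P3_iff {a b : ℝ} :
    (a, b) ∈ P3 ↔ (a, b) ∈ Pset ∧ a ≤ (HPi (a, b)).2 ∧ a ^ 4 * (HPi (a, b)).2 ≤ 2 := by
  refine ⟨fun ⟨hP, hlo, hhi⟩ => ⟨hP, ?_, ?_⟩, fun ⟨hP, hlo, hhi⟩ => ⟨hP, ?_, ?_⟩⟩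
  all_goals obtain ⟨ha, -, -, -, hab⟩ := hP
  · exact (le_HPi_snd_iff ha hab).2 hlo
  · exact (pow_four_mul_HPi_snd_le_two_iff ha hab).2 hhi
  · exact (le_HPi_snd_iff ha hab).1 hlo
  · exact (pow_four_mul_HPi_snd_le_two_iff ha hab).1 hhi

lemma pow_four_le_two_of_mem_P3 {a b : ℝ} (h : (a, b) ∈ P3) : a ^ 4 ≤ 2 := by
  obtain ⟨⟨ha, -⟩, hlo, hhi⟩ := mem_P3_iff.1 h
  have : a ^ 4 * a ≤ a ^ 4 * (HPi (a, b)).2 := by gcongr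
  nlinarith [one_lt_pow₀ ha (n := 4) (by norm_num)]

lemma fst_le_snd_of_mem_P3 {a b : ℝ} (h : (a, b) ∈ P3) : a ≤ b := by
  have ha4 := pow_four_le_two_of_mem_P3 h
  obtain ⟨⟨ha, -⟩, hlo, -⟩ := h
  refine le_trans ?_ hlo
  rw [le_div_iff₀ (by positivity)]
  nlinarith [pow_le_pow_left₀ (by linarith) ha.le 3]

lemma P3_subset_Qset : P3 ⊆ Qset := by
  rintro ⟨a, b⟩ hp
  have hP := hp.1
  refine ⟨hP, hP.2.2.2.2, ?_⟩
  calc a ^ ((1 : ℝ) / 4) ≤ a ^ (1 : ℝ) := Real.rpow_le_rpow_of_exponent_le hP.1.le (by norm_num)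
    _ = a := Real.rpow_one a
    _ ≤ b := fst_le_snd_of_mem_P3 hp

lemma pow_four_rpow_one_div_four {a : ℝ} (ha : 0 ≤ a) : (a ^ 4) ^ ((1 : ℝ) / 4) = a := by
  rw [← Real.rpow_natCast, ← Real.rpow_mul ha]
  norm_num

lemma rpow_one_div_four_pow_four {A : ℝ} (hA : 0 ≤ A) : (A ^ ((1 : ℝ) / 4)) ^ 4 = A := by
  rw [← Real.rpow_natCast, ← Real.rpow_mul hA]
  norm_num

lemma HPi_mapsTo_P3_Qset : Set.MapsTo HPi P3 Qset := by
  rintro ⟨a, b⟩ hp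
  have ha4 := pow_four_le_two_of_mem_P3 hp
  obtain ⟨⟨ha, -⟩, hlo, hhi⟩ := mem_P3_iff.1 hp
  set B := (HPi (a, b)).2
  have hA : 1 < a ^ 4 := one_lt_pow₀ ha (by norm_num)
  have hB : B ≤ 2 := by nlinarith
  refine ⟨⟨hA, ha4, by linarith, hB, hhi⟩, hhi, ?_⟩
  show (a ^ 4) ^ ((1 : ℝ) / 4) ≤ B
  rwa [pow_four_rpow_one_div_four (by linarith)]

noncomputable def HPiSndInv (a B : ℝ) : ℝ := (B * a * (1 + a) + 2) / (a + 1 + B * a ^ 2)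

lemma HPi_snd_HPiSndInv {a B : ℝ} (ha : 0 < a) (hB : 0 ≤ B) :
    (HPi (a, HPiSndInv a B)).2 = B := by
  set b := HPiSndInv a B
  set d := a + 1 + B * a ^ 2
  have hd : d ≠ 0 := by positivity
  have hnum : a * b + b - 2 = B * (a * (1 + a ^ 2)) / d := by
    simp only [b, HPiSndInv]; field_simp; ring
  have hden : a * (1 + a - a * b) = a * (1 + a ^ 2) / d := by
    simp only [b, HPiSndInv]; field_simp; ring
  rw [HPi, hnum, hden, div_div_div_cancel_right₀ hd, mul_div_cancel_right₀ _ (by positivity)]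

lemma mem_P3_HPiSndInv {a B : ℝ} (ha : 1 < a) (haB : a ≤ B) (hB : a ^ 4 * B ≤ 2) :
    (a, HPiSndInv a B) ∈ P3 := by
  set b := HPiSndInv a B
  have hd : 0 < a + 1 + B * a ^ 2 := by nlinarith
  have hbd : b * (a + 1 + B * a ^ 2) = B * a * (1 + a) + 2 := div_mul_cancel₀ _ hd.ne'
  have ha4 : 1 < a ^ 4 := one_lt_pow₀ ha (by norm_num)
  have ha2 : a ≤ 2 := by nlinarith [pow_le_pow_left₀ (by linarith) ha.le 4]
  have hb1 : 1 ≤ b := by nlinarith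
  have hb2 : b ≤ 2 := by nlinarith
  have hab : a * b ≤ 2 := by
    have hBa3 : B * a ^ 3 ≤ 2 + B * a ^ 2 := by
      nlinarith [mul_nonneg (mul_nonneg (by linarith : (0 : ℝ) ≤ B) (sq_nonneg a)) (sq_nonneg (a - 1))]
    have : a * b * (a + 1 + B * a ^ 2) ≤ 2 * (a + 1 + B * a ^ 2) := by
      rw [mul_assoc, hbd]; nlinarith
    exact le_of_mul_le_mul_right this hd
  rw [mem_P3_iff, HPi_snd_HPiSndInv (by linarith) (by linarith)]
  exact ⟨⟨ha, ha2, hb1, hb2, hab⟩, haB, hB⟩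

lemma Qset_subset_image_HPi_P3 : Qset ⊆ HPi '' P3 := by
  rintro ⟨A, B⟩ ⟨⟨hA, -, -, -, hAB⟩, -, haB⟩
  set a := A ^ ((1 : ℝ) / 4)
  have ha4 : a ^ 4 = A := rpow_one_div_four_pow_four (by linarith)
  have ha : 1 < a := Real.one_lt_rpow hA (by norm_num)
  exact ⟨(a, HPiSndInv a B), mem_P3_HPiSndInv ha haB (ha4 ▸ hAB),
    Prod.ext ha4 (HPi_snd_HPiSndInv (by linarith) (by linarith))⟩

theorem HPi_image_P3 :
    HPi '' P3 = {p ∈ Pset | p.1 * p.2 ≤ 2 ∧ p.1 ^ ((1 : ℝ) / 4) ≤ p.2} ∧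
    P3 ⊆ HPi '' P3 :=
  ⟨HPi_mapsTo_P3_Qset.image_subset.antisymm Qset_subset_image_HPi_P3,
    P3_subset_Qset.trans Qset_subset_image_HPi_P3⟩
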